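/- arXiv:math/0405434 — 2 statements merged into one kernel-verified Lean document; each statement's English description precedes it below -/
import Mathlib

section
/- For compositions β₁, β₂, …, βₖ, the length of their composition satisfies l(β₁∘β₂∘⋯∘βₖ) = l(β₁) + Σ_{i=2}^{k} (∏_{j=1}^{i−1} |β_j|) · (l(βᵢ) − 1). -/
/-- The size `|β|` of a composition, i.e. the sum of its components. -/
def size (l : List ℕ+) : ℕ := (l.map fun x => (x : ℕ)).sum

/-- Near concatenation `α ⊙ β` of two (nonempty) compositions. -/
def odot (a b : List ℕ+) : List ℕ+ :=
  if a = [] then b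
  else if b = [] then a
  else a.dropLast ++ (a.getLastI + b.headI) :: b.tail

/-- `β^{⊙ m}`, the `m`-fold near concatenation of `β` with itself. -/
def odotPow (b : List ℕ+) : ℕ → List ℕ+
  | 0 => []
  | n + 1 => odot (odotPow b n) b

/-- The composition operation `α ∘ β = β^{⊙α₁} · β^{⊙α₂} ⋯ β^{⊙αₖ}`. -/
def compOp (a b : List ℕ+) : List ℕ+ := (a.map fun ai => odotPow b (ai : ℕ)).flatten

/-- `β₁ ∘ β₂ ∘ ⋯ ∘ βₖ` (the composition `1` is a two-sided identity for `∘`). -/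
def compFold (l : List (List ℕ+)) : List ℕ+ := l.foldr compOp [1]

/-- The list of all coarsenings of a composition. -/
def coarsenings : List ℕ+ → List (List ℕ+)
  | [] => [[]]
  | [a] => [[a]]
  | a :: b :: t => ((coarsenings (b :: t)).map (a :: ·)) ++ coarsenings ((a + b) :: t)
  termination_by l => l.length

/-- The multiset `M(β)` of partitions (as multisets of parts) of all coarsenings of `β`. -/
def Mset (b : List ℕ+) : Multiset (Multiset ℕ+) :=
  ↑((coarsenings b).map fun l => (l : Multiset ℕ+))

/-!
Each near concatenation of nonempty compositions loses one part, so `l(β^{⊙m}) = m (l(β) - 1) + 1`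
and hence `l(α ∘ β) = |α| (l(β) - 1) + l(α)`. Unfolding `β₁ ∘ (β₂ ∘ ⋯)` with this identity,
`l(β₁ ∘ ⋯ ∘ βₖ) - 1` picks up the factor `|β₁| ⋯ |β_{i-1}|` in front of `l(βᵢ) - 1`.
-/

lemma odot_ne_nil (a : List ℕ+) {b : List ℕ+} (hb : b ≠ []) : odot a b ≠ [] := by
  unfold odot
  split_ifs <;> simp_all

lemma length_odot {a b : List ℕ+} (ha : a ≠ []) (hb : b ≠ []) :
    (odot a b).length = a.length + b.length - 1 := by
  have ha₁ : 1 ≤ a.length := List.length_pos_iff.mpr ha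
  have hb₁ : 1 ≤ b.length := List.length_pos_iff.mpr hb
  rw [odot, if_neg ha, if_neg hb]
  simp only [List.length_append, List.length_dropLast, List.length_cons, List.length_tail]
  omega

lemma length_odotPow_succ {b : List ℕ+} (hb : b ≠ []) (n : ℕ) :
    (odotPow b (n + 1)).length = (n + 1) * (b.length - 1) + 1 := by
  have hb₁ : 1 ≤ b.length := List.length_pos_iff.mpr hb
  induction n with
  | zero => simp [odotPow, odot]; omega
  | succ n ih =>
    rw [odotPow, length_odot (a := odotPow b (n + 1)) (odot_ne_nil _ hb) hb, ih,
      add_mul (n + 1) 1, one_mul]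
    omega

lemma length_compOp (a : List ℕ+) {b : List ℕ+} (hb : b ≠ []) :
    (compOp a b).length = size a * (b.length - 1) + a.length := by
  induction a with
  | nil => simp [compOp, size]
  | cons x a ih =>
    obtain ⟨m, hm⟩ : ∃ m, (x : ℕ) = m + 1 := Nat.exists_eq_add_one.mpr x.pos
    have hcons : compOp (x :: a) b = odotPow b x ++ compOp a b := rfl
    have hsize : size (x :: a) = (m + 1) + size a := by simp [size, hm]
    rw [hcons, List.length_append, ih, hm, length_odotPow_succ hb, hsize, List.length_cons]
    ring

/-- This uniform shape also covers the empty list, which makes the induction a single step. -/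
lemma length_compFold_eq_one_add_sum (bs : List (List ℕ+)) (hb : ∀ b ∈ bs, b ≠ []) :
    (compFold bs).length =
      1 + ∑ i ∈ Finset.range bs.length,
        (∏ j ∈ Finset.range i, size (bs.getD j [])) * ((bs.getD i []).length - 1) := by
  induction bs with
  | nil => rfl
  | cons b bs ih =>
    have hbs : ∀ c ∈ bs, c ≠ [] := fun c hc => hb c (List.mem_cons_of_mem b hc)
    have hb₁ : 1 ≤ b.length := List.length_pos_iff.mpr (hb b List.mem_cons_self)
    have hcompFold : compFold bs ≠ [] := by simp [← List.length_pos_iff, ih hbs]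
    have hcons : compFold (b :: bs) = compOp b (compFold bs) := rfl
    rw [hcons, length_compOp b hcompFold,
      ih hbs, List.length_cons, Finset.sum_range_succ']
    simp only [Finset.prod_range_succ', List.getD_cons_succ, List.getD_cons_zero,
      Finset.prod_range_zero, one_mul, mul_right_comm _ (size b), ← Finset.sum_mul,
      Nat.add_sub_cancel_left]
    rw [mul_comm (size b)]
    omega

/-- Indices are 0-based: the sum runs over `1 ≤ i < k` and the product over `0 ≤ j < i`. -/
theorem length_compFold (bs : List (List ℕ+)) (hne : bs ≠ []) (hb : ∀ b ∈ bs, b ≠ []) :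
    (compFold bs).length =
      (bs.headI).length +
        ∑ i ∈ Finset.Ico 1 bs.length,
          (∏ j ∈ Finset.range i, size (bs.getD j [])) * ((bs.getD i []).length - 1) := by
  obtain ⟨b, bs, rfl⟩ := List.exists_cons_of_ne_nil hne
  have hb₁ : 1 ≤ b.length := List.length_pos_iff.mpr (hb b List.mem_cons_self)
  rw [length_compFold_eq_one_add_sum _ hb, Finset.sum_range_eq_add_Ico _ (by simp)]
  simp only [Finset.range_zero, Finset.prod_empty, one_mul, List.getD_cons_zero, List.headI_cons]
  omega
end

section
/- For any compositions β and γ, reversal commutes with the composition operation: (β∘γ)* = β*∘γ*. -/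
/-
Near concatenation is associative and reversal turns it around: `(α ⊙ β)* = β* ⊙ α*`.
Hence `(β^{⊙m})* = (β*)^{⊙m}`, and reversing the concatenation `β ∘ γ` of the blocks
`γ^{⊙βᵢ}` reverses the order of the blocks as well as each block.
-/

@[simp]
lemma nil_odot (b : List ℕ+) : odot [] b = b := by simp [odot]

@[simp]
lemma odot_nil (a : List ℕ+) : odot a [] = a := by simp [odot]

@[simp]
lemma append_singleton_odot_cons (as : List ℕ+) (x y : ℕ+) (t : List ℕ+) :
    odot (as ++ [x]) (y :: t) = as ++ (x + y) :: t := by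
  simp [odot, List.getLastI_eq_getLast?_getD]

@[simp]
lemma singleton_odot_cons (x y : ℕ+) (t : List ℕ+) : odot [x] (y :: t) = (x + y) :: t := by
  simpa using append_singleton_odot_cons [] x y t

lemma odot_assoc (a b c : List ℕ+) : odot (odot a b) c = odot a (odot b c) := by
  rcases List.eq_nil_or_concat' a with rfl | ⟨as, x, rfl⟩
  · simp
  rcases List.eq_nil_or_concat' b with rfl | ⟨bs, w, rfl⟩
  · simp
  rcases c with _ | ⟨z, u⟩
  · simp
  rcases bs with _ | ⟨y, t⟩
  · simp [add_assoc]
  · rw [append_singleton_odot_cons (y :: t) w z u]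
    simp only [List.cons_append, append_singleton_odot_cons]
    rw [show as ++ (x + y) :: (t ++ [w]) = (as ++ (x + y) :: t) ++ [w] by simp,
      append_singleton_odot_cons]
    simp

lemma reverse_odot (a b : List ℕ+) : (odot a b).reverse = odot b.reverse a.reverse := by
  rcases List.eq_nil_or_concat' a with rfl | ⟨as, x, rfl⟩
  · simp
  rcases b with _ | ⟨y, t⟩
  · simp
  simp [add_comm]

lemma odotPow_succ' (b : List ℕ+) (n : ℕ) : odotPow b (n + 1) = odot b (odotPow b n) := by
  induction n with
  | zero => simp [odotPow]
  | succ n ih =>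
    conv_lhs => rw [odotPow, ih, odot_assoc]
    rfl

lemma reverse_odotPow (b : List ℕ+) (n : ℕ) : (odotPow b n).reverse = odotPow b.reverse n := by
  induction n with
  | zero => rfl
  | succ n ih => rw [odotPow, reverse_odot, ih, ← odotPow_succ']

-- In `compOp` the coercion `ℕ+ → ℕ` is elaborated as a monadic lift of the whole list.
lemma compOp_eq_flatten_map (a b : List ℕ+) :
    compOp a b = (a.map fun x : ℕ+ => odotPow b x.val).flatten := by
  simp [compOp, ← List.map_eq_flatMap, Function.comp_def]

theorem reverse_compOp_general (β γ : List ℕ+) :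
    (compOp β γ).reverse = compOp β.reverse γ.reverse := by
  simp [compOp_eq_flatten_map, List.reverse_flatten, reverse_odotPow, Function.comp_def]

/-- Reversal commutes with the composition operation:
`(β∘γ)* = β*∘γ*`. -/
theorem reverse_compOp (β γ : List ℕ+) (hβ : β ≠ []) (hγ : γ ≠ []) :
    (compOp β γ).reverse = compOp β.reverse γ.reverse :=
  reverse_compOp_general β γ
end
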